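/- Let k be a field and let a, b, c, d be four distinct elements of the projective line P¹(k). Then there exists a unique element Γ of PGL₂(k) such that Γ(a) = b, Γ(b) = a, Γ(c) = d, and Γ(d) = c; moreover, this element Γ is an involution (Γ² = 1). -/

import Mathlib

/-!
Representatives `u, v` of `a, b` form a basis of `k²`, in which `c = [x u + y v]` and
`d = [x' u + y' v]` with all four coordinates nonzero. The linear map `u ↦ y y' v, v ↦ x x' u`
sends `x u + y v` to a multiple of `x' u + y' v` and vice versa, and its square is the scalar
`x x' y y'`, so it induces an involution swapping `a ↔ b` and `c ↔ d`. If `M'` also swaps the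
pairs, then `M' M` fixes `a`, `b`, `c`; a linear map having three pairwise independent
eigenvectors in the plane is a scalar, so `M' M` acts trivially and `M'` acts as `M⁻¹ = M`.
-/

open Matrix
open scoped LinearAlgebra.Projectivization

/-- The Möbius action of `GL(2,K)` on the projective line `ℙ K (Fin 2 → K)`.
Since scalar matrices act trivially, this realizes the action of `PGL₂(K)`;
an element of `PGL₂(K)` is the same as the induced transformation of the
projective line. -/
noncomputable def mobius {K : Type*} [Field K] (M : GL (Fin 2) K)
    (p : ℙ K (Fin 2 → K)) : ℙ K (Fin 2 → K) :=
  Projectivization.map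
    (LinearMap.GeneralLinearGroup.toLinearEquiv
      (Matrix.GeneralLinearGroup.toLin M)).toLinearMap
    (LinearEquiv.injective _) p

open Module Function

theorem LinearMap.injective_of_comp_self_eq_smul {k V : Type*} [Field k] [AddCommGroup V]
    [Module k V] {f : V →ₗ[k] V} {μ : k} (hμ : μ ≠ 0) (h : f ∘ₗ f = μ • LinearMap.id) :
    Injective f := fun v w hvw => smul_right_injective V hμ <|
  calc μ • v = f (f v) := (LinearMap.congr_fun h v).symm
    _ = f (f w) := by rw [hvw]
    _ = μ • w := LinearMap.congr_fun h w

namespace Module.Basis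

variable {k V : Type*} [Field k] [AddCommGroup V] [Module k V]

noncomputable def swapSMul (B : Basis (Fin 2) k V) (s t : k) : V →ₗ[k] V :=
  B.constr k ![s • B 1, t • B 0]

variable (B : Basis (Fin 2) k V) (s t : k)

@[simp]
theorem swapSMul_apply_zero : B.swapSMul s t (B 0) = s • B 1 := by
  simp [swapSMul]

@[simp]
theorem swapSMul_apply_one : B.swapSMul s t (B 1) = t • B 0 := by
  simp [swapSMul]

theorem swapSMul_apply_smul_add_smul (x y : k) :
    B.swapSMul s t (x • B 0 + y • B 1) = (y * t) • B 0 + (x * s) • B 1 := by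
  simp only [map_add, map_smul, swapSMul_apply_zero, swapSMul_apply_one, smul_smul]
  module

theorem swapSMul_comp_self : B.swapSMul s t ∘ₗ B.swapSMul s t = (s * t) • LinearMap.id := by
  refine B.ext fun i => ?_
  fin_cases i <;> simp [smul_smul, mul_comm]

end Module.Basis

namespace Projectivization

variable {k V : Type*} [Field k] [AddCommGroup V] [Module k V]

theorem map_eq_iff {f : V →ₗ[k] V} (hf : Injective f) {p q : ℙ k V} :
    map f hf p = q ↔ ∃ μ : k, μ • q.rep = f p.rep := by
  conv_lhs => rw [← p.mk_rep, map_mk, ← q.mk_rep]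
  exact mk_eq_mk_iff' k _ _ _ _

theorem map_map_of_comp_self_eq_smul {f : V →ₗ[k] V} (hf : Injective f) {μ : k}
    (h : f ∘ₗ f = μ • LinearMap.id) (p : ℙ k V) : map f hf (map f hf p) = p := by
  induction p using ind with
  | h v hv =>
    rw [map_mk, map_mk, mk_eq_mk_iff']
    exact ⟨μ, (LinearMap.congr_fun h v).symm⟩

theorem map_eq_id_of_eq_smul_id {f : V →ₗ[k] V} (hf : Injective f) {μ : k}
    (h : f = μ • LinearMap.id) : map f hf = id := by
  funext p
  exact (map_eq_iff hf).2 ⟨μ, by rw [h]; rfl⟩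

noncomputable def basisOfNe (hV : finrank k V = 2) {p q : ℙ k V} (h : p ≠ q) :
    Basis (Fin 2) k V :=
  basisOfLinearIndependentOfCardEqFinrank (linearIndependent_pair_iff_ne.2 h) (by simp [hV])

@[simp]
theorem basisOfNe_zero (hV : finrank k V = 2) {p q : ℙ k V} (h : p ≠ q) :
    basisOfNe hV h 0 = p.rep := by
  simp [basisOfNe]

@[simp]
theorem basisOfNe_one (hV : finrank k V = 2) {p q : ℙ k V} (h : p ≠ q) :
    basisOfNe hV h 1 = q.rep := by
  simp [basisOfNe]

theorem rep_ne_smul_rep {p q : ℙ k V} (h : p ≠ q) (a : k) : p.rep ≠ a • q.rep := fun hpq =>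
  one_ne_zero (LinearIndependent.pair_iff.1 (linearIndependent_pair_iff_ne.2 h) 1 (-a)
    (by simp [hpq])).1

theorem exists_rep_eq_smul_add_smul (hV : finrank k V = 2) {p q r : ℙ k V} (hpq : p ≠ q)
    (hrp : r ≠ p) (hrq : r ≠ q) :
    ∃ x y : k, x ≠ 0 ∧ y ≠ 0 ∧ r.rep = x • p.rep + y • q.rep := by
  set B := basisOfNe hV hpq
  have hr : r.rep = B.repr r.rep 0 • p.rep + B.repr r.rep 1 • q.rep := by
    have h := B.sum_repr r.rep
    rw [Fin.sum_univ_two, basisOfNe_zero, basisOfNe_one] at h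
    exact h.symm
  refine ⟨_, _, fun hx => rep_ne_smul_rep hrq (B.repr r.rep 1) ?_,
    fun hy => rep_ne_smul_rep hrp (B.repr r.rep 0) ?_, hr⟩
  · simpa [hx] using hr
  · simpa [hy] using hr

theorem map_eq_id_of_fixes_three (hV : finrank k V = 2) {f : V →ₗ[k] V} (hf : Injective f)
    {p q r : ℙ k V} (hpq : p ≠ q) (hrp : r ≠ p) (hrq : r ≠ q) (hp : map f hf p = p)
    (hq : map f hf q = q) (hr : map f hf r = r) : map f hf = id := by
  obtain ⟨α, hα⟩ := (map_eq_iff hf).1 hp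
  obtain ⟨β, hβ⟩ := (map_eq_iff hf).1 hq
  obtain ⟨γ, hγ⟩ := (map_eq_iff hf).1 hr
  obtain ⟨x, y, hx, hy, hxy⟩ := exists_rep_eq_smul_add_smul hV hpq hrp hrq
  have hcoef : (x * (α - γ)) • p.rep + (y * (β - γ)) • q.rep = 0 := by
    rw [hxy, map_add, map_smul, map_smul, ← hα, ← hβ] at hγ
    linear_combination (norm := module) -hγ
  obtain ⟨hαγ, hβγ⟩ := LinearIndependent.pair_iff.1 (linearIndependent_pair_iff_ne.2 hpq) _ _ hcoef
  rw [mul_eq_zero, sub_eq_zero, or_iff_right hx] at hαγ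
  rw [mul_eq_zero, sub_eq_zero, or_iff_right hy] at hβγ
  refine map_eq_id_of_eq_smul_id hf (μ := γ) ((basisOfNe hV hpq).ext fun i => ?_)
  fin_cases i <;> simp [← hα, ← hβ, hαγ, hβγ]

theorem exists_map_swap (hV : finrank k V = 2) {a b c d : ℙ k V} (hab : a ≠ b) (hac : a ≠ c)
    (had : a ≠ d) (hbc : b ≠ c) (hbd : b ≠ d) :
    ∃ (f : V →ₗ[k] V) (hf : Injective f), map f hf a = b ∧ map f hf b = a ∧
      map f hf c = d ∧ map f hf d = c ∧ ∀ p, map f hf (map f hf p) = p := by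
  obtain ⟨x, y, hx, hy, hc⟩ := exists_rep_eq_smul_add_smul hV hab hac.symm hbc.symm
  obtain ⟨x', y', hx', hy', hd⟩ := exists_rep_eq_smul_add_smul hV hab had.symm hbd.symm
  set B := basisOfNe hV hab
  have hB0 : a.rep = B 0 := (basisOfNe_zero hV hab).symm
  have hB1 : b.rep = B 1 := (basisOfNe_one hV hab).symm
  have hsq := B.swapSMul_comp_self (y * y') (x * x')
  have hf := LinearMap.injective_of_comp_self_eq_smul (by simp [hx, hy, hx', hy']) hsq
  refine ⟨_, hf, ?_, ?_, ?_, ?_, map_map_of_comp_self_eq_smul hf hsq⟩ <;> rw [map_eq_iff]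
  · exact ⟨y * y', by simp [hB0, hB1]⟩
  · exact ⟨x * x', by simp [hB0, hB1]⟩
  · refine ⟨x * y, ?_⟩
    rw [hc, hd, hB0, hB1, Basis.swapSMul_apply_smul_add_smul]
    module
  · refine ⟨x' * y', ?_⟩
    rw [hc, hd, hB0, hB1, Basis.swapSMul_apply_smul_add_smul]
    module

end Projectivization

section Mobius

variable {k : Type*} [Field k]

theorem mobius_mul (M N : GL (Fin 2) k) : mobius (M * N) = mobius M ∘ mobius N := by
  funext p
  induction p using Projectivization.ind
  simp [mobius, Projectivization.map_mk]

theorem exists_mobius_eq_map {f : (Fin 2 → k) →ₗ[k] Fin 2 → k} (hf : Injective f) :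
    ∃ M : GL (Fin 2) k, mobius M = Projectivization.map f hf :=
  ⟨Matrix.GeneralLinearGroup.toLin.symm
    (LinearMap.GeneralLinearGroup.ofLinearEquiv (LinearEquiv.ofInjectiveEndo f hf)), by
    funext p
    induction p using Projectivization.ind
    simp [mobius, Projectivization.map_mk]⟩

theorem mobius_eq_id_of_fixes_three (M : GL (Fin 2) k) {p q r : ℙ k (Fin 2 → k)} (hpq : p ≠ q)
    (hrp : r ≠ p) (hrq : r ≠ q) (hp : mobius M p = p) (hq : mobius M q = q)
    (hr : mobius M r = r) : mobius M = id :=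
  Projectivization.map_eq_id_of_fixes_three (by simp) _ hpq hrp hrq hp hq hr

end Mobius

theorem unique_involution_swapping_two_pairs
    {k : Type*} [Field k] (a b c d : ℙ k (Fin 2 → k))
    (hab : a ≠ b) (hac : a ≠ c) (had : a ≠ d) (hbc : b ≠ c) (hbd : b ≠ d) :
    ∃ M : GL (Fin 2) k,
      mobius M a = b ∧ mobius M b = a ∧ mobius M c = d ∧ mobius M d = c ∧
      (∀ p, mobius M (mobius M p) = p) ∧
      (∀ M' : GL (Fin 2) k,
        mobius M' a = b → mobius M' b = a → mobius M' c = d → mobius M' d = c →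
        ∀ p, mobius M' p = mobius M p) := by
  obtain ⟨f, hf, hfa, hfb, hfc, hfd, hff⟩ :=
    Projectivization.exists_map_swap (by simp) hab hac had hbc hbd
  obtain ⟨M, hM⟩ := exists_mobius_eq_map hf
  rw [← hM] at hfa hfb hfc hfd hff
  refine ⟨M, hfa, hfb, hfc, hfd, hff, fun M' h'a h'b _ h'd p => ?_⟩
  have hid : mobius (M' * M) = id :=
    mobius_eq_id_of_fixes_three _ hab hac.symm hbc.symm (by simp [mobius_mul, hfa, h'b])
      (by simp [mobius_mul, hfb, h'a]) (by simp [mobius_mul, hfc, h'd])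
  calc mobius M' p = mobius (M' * M) (mobius M p) := by rw [mobius_mul, Function.comp_apply, hff]
    _ = mobius M p := by rw [hid, id]
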